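/- (Lemma 3.3) There exists a constant c>0, independent of the mesh parameter h, such that for every y ∈ L²(Γ) the discrete Kirchhoff operator satisfies the stability estimate |S_h* y|₂ = |K_h(P_h y)|₂ ≤ c ‖y‖_{L²(Γ)}. -/

import Mathlib

/-!
Write the hat function of a Dirichlet vertex `v` as `φ_v = (φ_v - S̃_h δ_v) + S̃_h δ_v`, where
`S̃_h δ_v` is affine along every whole edge and therefore does not depend on the mesh. The first
summand vanishes at all vertices, so it is a Galerkin test function and `a(φ_v - S̃_h δ_v, p_h)`
equals the pairing `(y, φ_v - S̃_h δ_v)`. Hence `K_h p_h (v)` is a sum of `L²` pairings of `y`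
with functions bounded by `3` and `2`, plus `a(S̃_h δ_v, p_h)`, which is bounded by a
mesh-independent multiple of `‖p_h‖_{H¹} ≤ ‖y‖ / α` (coercivity).
-/

open MeasureTheory Set

/-- A metric graph: a finite graph where each edge `e` is identified with the
interval `[0, len e]`, with `src e` sitting at coordinate `0` and `dst e` at `len e`. -/
structure MGraph where
  V : Type
  E : Type
  fintV : Fintype V
  fintE : Fintype E
  decV : DecidableEq V
  src : E → V
  dst : E → V
  len : E → ℝ
  len_pos : ∀ e, 0 < len e

attribute [instance] MGraph.fintV MGraph.fintE MGraph.decV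

/-- A function on the metric graph, given edgewise. -/
abbrev GFun (G : MGraph) := G.E → ℝ → ℝ

namespace MGraph

variable (G : MGraph)

/-- The derivative along edge `e` (within the edge interval). -/
noncomputable def edgeDeriv (y : GFun G) (e : G.E) : ℝ → ℝ :=
  derivWithin (y e) (Icc (0:ℝ) (G.len e))

/-- The second derivative along edge `e`. -/
noncomputable def edgeDeriv2 (y : GFun G) (e : G.E) : ℝ → ℝ :=
  derivWithin (G.edgeDeriv y e) (Icc (0:ℝ) (G.len e))

/-- The `L²(Γ)` inner product `(f,g) = Σ_e ∫_e f g`. -/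
noncomputable def ip2 (f g : GFun G) : ℝ :=
  ∑ e : G.E, ∫ x in (0:ℝ)..(G.len e), f e x * g e x

/-- The bilinear form `a(y,w) = Σ_e ∫_e (y' w' + c₀ y w)`. -/
noncomputable def bform (c0 y w : GFun G) : ℝ :=
  ∑ e : G.E, ∫ x in (0:ℝ)..(G.len e),
    (G.edgeDeriv y e x * G.edgeDeriv w e x + c0 e x * y e x * w e x)

/-- Membership in `L²(Γ)` (edgewise square integrability). -/
def MemL2 (f : GFun G) : Prop :=
  ∀ e, IntervalIntegrable (fun x => (f e x)^2) volume 0 (G.len e)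

/-- The squared `L²(Γ)`-norm. -/
noncomputable def l2normSq (f : GFun G) : ℝ :=
  ∑ e : G.E, ∫ x in (0:ℝ)..(G.len e), (f e x)^2

/-- The squared `H¹(Γ)`-norm. -/
noncomputable def h1normSq (y : GFun G) : ℝ :=
  G.l2normSq y + ∑ e : G.E, ∫ x in (0:ℝ)..(G.len e), (G.edgeDeriv y e x)^2

/-- The squared `H²(Γ)`-seminorm `Σ_e ‖y''‖²`. -/
noncomputable def h2semiSq (y : GFun G) : ℝ :=
  ∑ e : G.E, ∫ x in (0:ℝ)..(G.len e), (G.edgeDeriv2 y e x)^2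

/-- Membership in `H¹(Γ)` with vertex values `yv` (in particular continuity
at the vertices of the graph). -/
def MemH1 (y : GFun G) (yv : G.V → ℝ) : Prop :=
  (∀ e, ContinuousOn (y e) (Icc (0:ℝ) (G.len e))) ∧
  (∀ e, ∃ s : Finset ℝ, ∀ x ∈ Icc (0:ℝ) (G.len e), x ∉ s →
      DifferentiableWithinAt ℝ (y e) (Icc (0:ℝ) (G.len e)) x) ∧
  (∀ e, y e 0 = yv (G.src e)) ∧
  (∀ e, y e (G.len e) = yv (G.dst e)) ∧
  G.MemL2 y ∧
  (∀ e, IntervalIntegrable (fun x => (G.edgeDeriv y e x)^2) volume 0 (G.len e))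

/-- Membership in `H¹_D(Γ)`: `H¹(Γ)` with vanishing values at the Dirichlet vertices. -/
def MemH1D (VD : Finset G.V) (y : GFun G) (yv : G.V → ℝ) : Prop :=
  G.MemH1 y yv ∧ ∀ v ∈ VD, yv v = 0

/-- Membership in `H²(Γ)` (edgewise; the function is `C¹` on each closed edge and the
first derivative is again weakly differentiable with square-integrable derivative). -/
def MemH2 (y : GFun G) : Prop :=
  (∀ e, ∀ x ∈ Icc (0:ℝ) (G.len e), DifferentiableWithinAt ℝ (y e) (Icc (0:ℝ) (G.len e)) x) ∧
  (∀ e, ContinuousOn (G.edgeDeriv y e) (Icc (0:ℝ) (G.len e))) ∧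
  (∀ e, ∀ᵐ x ∂(volume.restrict (Ioo (0:ℝ) (G.len e))),
      DifferentiableWithinAt ℝ (G.edgeDeriv y e) (Icc (0:ℝ) (G.len e)) x) ∧
  (∀ e, IntervalIntegrable (fun x => (G.edgeDeriv2 y e x)^2) volume 0 (G.len e))

/-- The Kirchhoff operator `(Ky)(v) = Σ_{e ∈ E_v} y|_e'(v)`, where the derivative along each
incident edge is taken in the direction pointing towards `v`. -/
noncomputable def Kop (y : GFun G) (v : G.V) : ℝ :=
  ∑ e : G.E, ((if G.dst e = v then G.edgeDeriv y e (G.len e) else 0)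
    - (if G.src e = v then G.edgeDeriv y e 0 else 0))

/-- Adjacency of vertices. -/
def Adj (v w : G.V) : Prop :=
  ∃ e, (G.src e = v ∧ G.dst e = w) ∨ (G.src e = w ∧ G.dst e = v)

/-- Connectedness of the graph. -/
def Connected : Prop := ∀ v w : G.V, Relation.ReflTransGen G.Adj v w

/-- The Euclidean norm of the restriction of `u` to the Dirichlet vertex set. -/
noncomputable def dnorm (VD : Finset G.V) (u : G.V → ℝ) : ℝ :=
  Real.sqrt (∑ v ∈ VD, (u v)^2)

/-- `y` is affine on each cell of the equidistant grid with `n e` subintervals on edge `e`. -/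
def PiecewiseAffine (n : G.E → ℕ) (y : GFun G) : Prop :=
  ∀ e, ∀ k : ℕ, k < n e →
    ∃ p q : ℝ, ∀ x ∈ Icc ((k : ℝ) * (G.len e / (n e : ℝ))) (((k : ℝ) + 1) * (G.len e / (n e : ℝ))),
      y e x = p * x + q

/-- Membership in the finite element space `V_h` (continuous, edgewise piecewise affine). -/
def MemVh (n : G.E → ℕ) (y : GFun G) (yv : G.V → ℝ) : Prop :=
  G.MemH1 y yv ∧ G.PiecewiseAffine n y

/-- Membership in `V_{h,D} = V_h ∩ H¹_D(Γ)`. -/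
def MemVhD (VD : Finset G.V) (n : G.E → ℕ) (y : GFun G) (yv : G.V → ℝ) : Prop :=
  G.MemVh n y yv ∧ ∀ v ∈ VD, yv v = 0

/-- The nodal (hat) basis function of `V_h` attached to the vertex `v`. -/
noncomputable def hatFn (n : G.E → ℕ) (v : G.V) : GFun G :=
  fun e x =>
    (if G.src e = v then max 0 (1 - x / (G.len e / (n e : ℝ))) else 0)
    + (if G.dst e = v then max 0 (1 - (G.len e - x) / (G.len e / (n e : ℝ))) else 0)

/-- The discrete (variational) Kirchhoff operator applied to `p_h = P_h ydata`:
`(K_h p_h)(v) = a(φ_v, p_h) - (ydata, φ_v)`. -/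
noncomputable def Khop (c0 : GFun G) (n : G.E → ℕ) (ydata ph : GFun G) (v : G.V) : ℝ :=
  G.bform c0 (G.hatFn n v) ph - G.ip2 ydata (G.hatFn n v)

/-- The objective functional `½‖y-ȳ‖² + (β/2)|u|₂²` of the optimal control problem. -/
noncomputable def objective (VD : Finset G.V) (ybar : GFun G) (β : ℝ)
    (u : G.V → ℝ) (y : GFun G) : ℝ :=
  (1/2) * G.l2normSq (fun e x => y e x - ybar e x) + (β/2) * ∑ v ∈ VD, (u v)^2

/-- `(u, y)` is feasible for the continuous optimal control problem:
`y` is a weak solution of the state equation with Dirichlet data `u`. -/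
def Feasible (VD : Finset G.V) (c0 f : GFun G) (u : G.V → ℝ)
    (y : GFun G) (yv : G.V → ℝ) : Prop :=
  G.MemH1 y yv ∧ (∀ v ∈ VD, yv v = u v) ∧
  ∀ w wv, G.MemH1D VD w wv → G.bform c0 y w = G.ip2 f w

/-- `(u, y)` is feasible for the discretized optimal control problem:
`y ∈ V_h` is a Galerkin solution of the state equation with Dirichlet data `u`. -/
def FeasibleH (VD : Finset G.V) (n : G.E → ℕ) (c0 f : GFun G) (u : G.V → ℝ)
    (y : GFun G) (yv : G.V → ℝ) : Prop :=
  G.MemVh n y yv ∧ (∀ v ∈ VD, yv v = u v) ∧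
  ∀ w wv, G.MemVhD VD n w wv → G.bform c0 y w = G.ip2 f w

/-- The edgewise-affine extension `S̃_h u` of Dirichlet data `u` (value `u v` at Dirichlet
vertices, `0` at Kirchhoff vertices, affine along each whole edge). -/
noncomputable def tildeExt (VD : Finset G.V) (u : G.V → ℝ) : GFun G :=
  fun e x =>
    (if G.src e ∈ VD then u (G.src e) else 0)
    + ((if G.dst e ∈ VD then u (G.dst e) else 0)
        - (if G.src e ∈ VD then u (G.src e) else 0)) * x / G.len e

end MGraph

lemma sqrt_sum_sq_le_sqrt_card_mul {ι : Type*} (s : Finset ι) {f : ι → ℝ} {M : ℝ}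
    (h : ∀ i ∈ s, |f i| ≤ M) : √(∑ i ∈ s, f i ^ 2) ≤ √s.card * M := by
  rcases s.eq_empty_or_nonempty with rfl | ⟨i, hi⟩
  · simp
  have hM : 0 ≤ M := (abs_nonneg _).trans (h i hi)
  rw [← Real.sqrt_sq hM, ← Real.sqrt_mul s.card.cast_nonneg]
  refine Real.sqrt_le_sqrt ?_
  calc ∑ i ∈ s, f i ^ 2 ≤ ∑ _i ∈ s, M ^ 2 :=
        Finset.sum_le_sum fun i hi => sq_le_sq' (abs_le.1 (h i hi)).1 (abs_le.1 (h i hi)).2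
    _ = s.card * M ^ 2 := by rw [Finset.sum_const, nsmul_eq_mul]

lemma nonpos_of_forall_pos_le_inv_mul {X c : ℝ} (h : ∀ ε > 0, X ≤ ε⁻¹ * c) : X ≤ 0 := by
  have hlim : Filter.Tendsto (fun ε : ℝ => ε⁻¹ * c) Filter.atTop (nhds 0) := by
    simpa using tendsto_inv_atTop_zero.mul_const c
  exact ge_of_tendsto hlim ((Filter.eventually_gt_atTop 0).mono h)

lemma le_mul_of_forall_pos_two_mul_le {X s t : ℝ} (hs : 0 ≤ s) (ht : 0 ≤ t)
    (h : ∀ ε > 0, 2 * X ≤ ε * s ^ 2 + ε⁻¹ * t ^ 2) : X ≤ s * t := by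
  rcases hs.eq_or_lt with rfl | hs
  · have : 2 * X ≤ 0 := nonpos_of_forall_pos_le_inv_mul fun ε hε => by simpa using h ε hε
    simp only [zero_mul]
    linarith
  rcases ht.eq_or_lt with rfl | ht
  · have : 2 * X ≤ 0 := nonpos_of_forall_pos_le_inv_mul fun ε hε => by
      simpa using h ε⁻¹ (inv_pos.2 hε)
    simp only [mul_zero]
    linarith
  have := h (t / s) (by positivity)
  have hts : t / s * s ^ 2 + (t / s)⁻¹ * t ^ 2 = 2 * (s * t) := by
    field_simp
    ring
  linarith

/-- Cauchy–Schwarz without measurability of `f` and `g` (the data `y` of the state equation is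
only assumed square integrable): if `f * g` is not integrable its integral is `0`, otherwise
integrate `2|fg| ≤ ε f² + ε⁻¹ g²`. -/
lemma abs_integral_mul_le_sqrt_mul_sqrt {α : Type*} [MeasurableSpace α] {μ : Measure α}
    {f g : α → ℝ} (hf : Integrable (fun x => f x ^ 2) μ) (hg : Integrable (fun x => g x ^ 2) μ) :
    |∫ x, f x * g x ∂μ| ≤ √(∫ x, f x ^ 2 ∂μ) * √(∫ x, g x ^ 2 ∂μ) := by
  by_cases hfg : Integrable (fun x => f x * g x) μ
  swap
  · rw [integral_undef hfg, abs_zero]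
    positivity
  have hF : 0 ≤ ∫ x, f x ^ 2 ∂μ := integral_nonneg fun x => sq_nonneg _
  have hG : 0 ≤ ∫ x, g x ^ 2 ∂μ := integral_nonneg fun x => sq_nonneg _
  refine le_mul_of_forall_pos_two_mul_le (Real.sqrt_nonneg _) (Real.sqrt_nonneg _) fun ε hε => ?_
  rw [Real.sq_sqrt hF, Real.sq_sqrt hG, ← integral_const_mul, ← integral_const_mul,
    ← integral_add (hf.const_mul ε) (hg.const_mul ε⁻¹)]
  calc 2 * |∫ x, f x * g x ∂μ| ≤ 2 * ∫ x, |f x * g x| ∂μ := by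
        gcongr; exact abs_integral_le_integral_abs
    _ = ∫ x, 2 * |f x * g x| ∂μ := (integral_const_mul _ _).symm
    _ ≤ ∫ x, ε * f x ^ 2 + ε⁻¹ * g x ^ 2 ∂μ := by
        refine integral_mono (hfg.abs.const_mul 2) ((hf.const_mul ε).add (hg.const_mul ε⁻¹))
          fun x => ?_
        have hsq : ε * f x ^ 2 + ε⁻¹ * g x ^ 2 - 2 * |f x * g x|
            = ε⁻¹ * (ε * |f x| - |g x|) ^ 2 := by
          rw [abs_mul, ← sq_abs (f x), ← sq_abs (g x)]
          field_simp
          ring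
        linarith [mul_nonneg (inv_nonneg.2 hε.le) (sq_nonneg (ε * |f x| - |g x|))]

lemma integral_sq_le_of_abs_le {α : Type*} [MeasurableSpace α] {μ : Measure α}
    [IsFiniteMeasure μ] {g : α → ℝ} {K : ℝ} (hK : ∀ᵐ x ∂μ, |g x| ≤ K) :
    ∫ x, g x ^ 2 ∂μ ≤ K ^ 2 * μ.real Set.univ := by
  rw [mul_comm, ← smul_eq_mul, ← integral_const]
  refine integral_mono_of_nonneg (ae_of_all _ fun x => sq_nonneg _) (integrable_const _) ?_
  filter_upwards [hK] with x hx
  exact sq_le_sq' (abs_le.1 hx).1 (abs_le.1 hx).2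

lemma ae_restrict_Ioc_mem_Ioo_notMem {L : ℝ} {s : Set ℝ} (hs : s.Countable) :
    ∀ᵐ x ∂(volume.restrict (Ioc 0 L)), x ∈ Ioo 0 L ∧ x ∉ s := by
  have hnull : ∀ᵐ x ∂volume, x ∉ insert L s :=
    measure_eq_zero_iff_ae_notMem.1 ((hs.insert L).measure_zero _)
  filter_upwards [ae_restrict_of_ae hnull, ae_restrict_mem measurableSet_Ioc] with x hxs hx
  rw [mem_insert_iff, not_or] at hxs
  exact ⟨⟨hx.1, hx.2.lt_of_ne hxs.1⟩, hxs.2⟩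

def IsAffineOn (f : ℝ → ℝ) (s : Set ℝ) : Prop := ∃ p q : ℝ, ∀ x ∈ s, f x = p * x + q

namespace IsAffineOn

variable {f g : ℝ → ℝ} {s : Set ℝ}

lemma sub (hf : IsAffineOn f s) (hg : IsAffineOn g s) : IsAffineOn (fun x => f x - g x) s := by
  obtain ⟨p, q, hpq⟩ := hf
  obtain ⟨p', q', hpq'⟩ := hg
  exact ⟨p - p', q - q', fun x hx => by simp only [hpq x hx, hpq' x hx]; ring⟩

lemma add (hf : IsAffineOn f s) (hg : IsAffineOn g s) : IsAffineOn (fun x => f x + g x) s := by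
  obtain ⟨p, q, hpq⟩ := hf
  obtain ⟨p', q', hpq'⟩ := hg
  exact ⟨p + p', q + q', fun x hx => by simp only [hpq x hx, hpq' x hx]; ring⟩

lemma ite_zero (hf : IsAffineOn f s) (c : Prop) [Decidable c] :
    IsAffineOn (fun x => if c then f x else 0) s := by
  by_cases hc : c
  · simpa [hc] using hf
  · exact ⟨0, 0, fun x _ => by simp [hc]⟩

lemma max_zero (hf : IsAffineOn f s) (hsign : (∀ x ∈ s, 0 ≤ f x) ∨ ∀ x ∈ s, f x ≤ 0) :
    IsAffineOn (fun x => max 0 (f x)) s := by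
  rcases hsign with hpos | hneg
  · obtain ⟨p, q, hpq⟩ := hf
    exact ⟨p, q, fun x hx => by simp only [max_eq_right (hpos x hx), ← hpq x hx]⟩
  · exact ⟨0, 0, fun x hx => by simp only [max_eq_left (hneg x hx)]; ring⟩

end IsAffineOn

lemma isAffineOn_max_zero_one_sub_div {h : ℝ} (hh : 0 < h) (k : ℕ) :
    IsAffineOn (fun x => max 0 (1 - x / h)) (Icc (k * h) ((k + 1) * h)) := by
  refine IsAffineOn.max_zero ⟨-(1 / h), 1, fun x _ => by ring⟩ ?_
  rcases Nat.eq_zero_or_pos k with rfl | hk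
  · refine Or.inl fun x hx => ?_
    have : x / h ≤ 1 := (div_le_one hh).2 (by simpa using hx.2)
    linarith
  · refine Or.inr fun x hx => ?_
    have hk1 : (1 : ℝ) ≤ k := by exact_mod_cast hk
    have : 1 ≤ x / h := (one_le_div hh).2 (by nlinarith [hx.1])
    linarith

lemma isAffineOn_max_zero_one_sub_sub_div {L h : ℝ} (hh : 0 < h) {k m : ℕ} (hkm : k < m)
    (hL : m * h = L) :
    IsAffineOn (fun x => max 0 (1 - (L - x) / h)) (Icc (k * h) ((k + 1) * h)) := by
  subst hL
  refine IsAffineOn.max_zero ⟨1 / h, 1 - m, fun x _ => by field_simp; ring⟩ ?_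
  rcases (Nat.succ_le_of_lt hkm).eq_or_lt with hlast | hinner
  · refine Or.inl fun x hx => ?_
    have hm : (m : ℝ) = k + 1 := by exact_mod_cast hlast.symm
    have : (m * h - x) / h ≤ 1 := (div_le_one hh).2 (by rw [hm]; nlinarith [hx.1])
    linarith
  · refine Or.inr fun x hx => ?_
    have hm : (k : ℝ) + 2 ≤ m := by exact_mod_cast hinner
    have : 1 ≤ (m * h - x) / h := (one_le_div hh).2 (by nlinarith [hx.2])
    linarith

lemma exists_hasDerivAt_max_zero {f : ℝ → ℝ} {a x : ℝ} (hf : HasDerivAt f a x) (hx : f x ≠ 0) :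
    ∃ d, |d| ≤ |a| ∧ HasDerivAt (fun y => max 0 (f y)) d x := by
  rcases hx.lt_or_gt with hneg | hpos
  · refine ⟨0, by simp, (hasDerivAt_const x 0).congr_of_eventuallyEq ?_⟩
    filter_upwards [hf.continuousAt.eventually (gt_mem_nhds hneg)] with y hy
    exact max_eq_left hy.le
  · refine ⟨a, le_rfl, hf.congr_of_eventuallyEq ?_⟩
    filter_upwards [hf.continuousAt.eventually (lt_mem_nhds hpos)] with y hy
    exact max_eq_right hy.le

lemma exists_hasDerivAt_ite_zero {f : ℝ → ℝ} {K x : ℝ} (c : Prop) [Decidable c] (hK : 0 ≤ K)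
    (hf : ∃ d, |d| ≤ K ∧ HasDerivAt f d x) :
    ∃ d, |d| ≤ K ∧ HasDerivAt (fun y => if c then f y else 0) d x := by
  by_cases hc : c
  · simpa [hc] using hf
  · exact ⟨0, by simpa using hK, by simpa [hc] using hasDerivAt_const x (0 : ℝ)⟩

namespace MGraph

variable (G : MGraph)

noncomputable def totalLength : ℝ := ∑ e, G.len e

lemma sum_one_div_len_nonneg : 0 ≤ ∑ e, 1 / G.len e :=
  Finset.sum_nonneg fun e _ => (one_div_pos.2 (G.len_pos e)).le

lemma one_div_len_le_sum (e : G.E) : 1 / G.len e ≤ ∑ e, 1 / G.len e :=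
  Finset.single_le_sum (fun e _ => (one_div_pos.2 (G.len_pos e)).le) (Finset.mem_univ e)

/-- Unlike `MemL2`, this includes a.e. measurability on every edge. -/
def EdgeMemLp2 (f : GFun G) : Prop :=
  ∀ e, MemLp (f e) 2 (volume.restrict (Ioc 0 (G.len e)))

variable {G}

lemma edgeDeriv_eq_of_hasDerivAt {y : GFun G} {e : G.E} {x d : ℝ}
    (hx : x ∈ Ioo 0 (G.len e)) (h : HasDerivAt (y e) d x) : G.edgeDeriv y e x = d := by
  rw [edgeDeriv, derivWithin_of_mem_nhds (Icc_mem_nhds hx.1 hx.2), h.deriv]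

lemma aestronglyMeasurable_edgeDeriv (y : GFun G) (e : G.E) :
    AEStronglyMeasurable (G.edgeDeriv y e) (volume.restrict (Ioc 0 (G.len e))) := by
  refine (measurable_deriv (y e)).aestronglyMeasurable.congr ?_
  filter_upwards [ae_restrict_Ioc_mem_Ioo_notMem (L := G.len e) countable_empty] with x hx
  exact (derivWithin_of_mem_nhds (Icc_mem_nhds hx.1.1 hx.1.2)).symm

lemma EdgeMemLp2.memL2 {f : GFun G} (hf : G.EdgeMemLp2 f) : G.MemL2 f := fun e =>
  (intervalIntegrable_iff_integrableOn_Ioc_of_le (G.len_pos e).le).2 (hf e).integrable_sq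

lemma EdgeMemLp2.sub {f g : GFun G} (hf : G.EdgeMemLp2 f) (hg : G.EdgeMemLp2 g) :
    G.EdgeMemLp2 (f - g) := fun e => (hf e).sub (hg e)

lemma EdgeMemLp2.intervalIntegrable_mul {f g : GFun G} (hf : G.EdgeMemLp2 f)
    (hg : G.EdgeMemLp2 g) (e : G.E) :
    IntervalIntegrable (fun x => f e x * g e x) volume 0 (G.len e) :=
  (intervalIntegrable_iff_integrableOn_Ioc_of_le (G.len_pos e).le).2
    ((hf e).integrable_mul (hg e))

lemma edgeMemLp2_of_abs_le {f : GFun G} {K : G.E → ℝ}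
    (hf : ∀ e, AEStronglyMeasurable (f e) (volume.restrict (Ioc 0 (G.len e))))
    (hK : ∀ e, ∀ᵐ x ∂(volume.restrict (Ioc 0 (G.len e))), |f e x| ≤ K e) :
    G.EdgeMemLp2 f := fun e => MemLp.of_bound (hf e) (K e) (hK e)

lemma EdgeMemLp2.mul_left {c0 f : GFun G} {C0 : ℝ} (hc0meas : ∀ e, Measurable (c0 e))
    (hc0 : ∀ e, ∀ x ∈ Icc 0 (G.len e), |c0 e x| ≤ C0) (hf : G.EdgeMemLp2 f) :
    G.EdgeMemLp2 (fun e x => c0 e x * f e x) := fun e =>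
  (hf e).mul' (memLp_top_of_bound (hc0meas e).aestronglyMeasurable C0
    (ae_restrict_of_forall_mem measurableSet_Ioc fun x hx => hc0 e x (Ioc_subset_Icc_self hx)))

lemma MemH1.edgeMemLp2 {y : GFun G} {yv : G.V → ℝ} (hy : G.MemH1 y yv) : G.EdgeMemLp2 y :=
  fun e => (memLp_two_iff_integrable_sq
    (((hy.1 e).mono Ioc_subset_Icc_self).aestronglyMeasurable measurableSet_Ioc)).2
    ((intervalIntegrable_iff_integrableOn_Ioc_of_le (G.len_pos e).le).1 (hy.2.2.2.2.1 e))

lemma MemH1.edgeMemLp2_edgeDeriv {y : GFun G} {yv : G.V → ℝ} (hy : G.MemH1 y yv) :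
    G.EdgeMemLp2 (G.edgeDeriv y) :=
  fun e => (memLp_two_iff_integrable_sq (aestronglyMeasurable_edgeDeriv y e)).2
    ((intervalIntegrable_iff_integrableOn_Ioc_of_le (G.len_pos e).le).1 (hy.2.2.2.2.2 e))

lemma l2normSq_nonneg (f : GFun G) : 0 ≤ G.l2normSq f :=
  Finset.sum_nonneg fun e _ =>
    intervalIntegral.integral_nonneg (G.len_pos e).le fun _ _ => sq_nonneg _

lemma l2normSq_le_h1normSq (y : GFun G) : G.l2normSq y ≤ G.h1normSq y :=
  le_add_of_nonneg_right (G.l2normSq_nonneg _)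

lemma l2normSq_edgeDeriv_le_h1normSq (y : GFun G) : G.l2normSq (G.edgeDeriv y) ≤ G.h1normSq y :=
  le_add_of_nonneg_left (G.l2normSq_nonneg _)

lemma h1normSq_nonneg (y : GFun G) : 0 ≤ G.h1normSq y :=
  add_nonneg (G.l2normSq_nonneg _) (G.l2normSq_nonneg _)

lemma l2normSq_le_of_abs_le {f : GFun G} {K : ℝ}
    (hK : ∀ e, ∀ᵐ x ∂(volume.restrict (Ioc 0 (G.len e))), |f e x| ≤ K) :
    G.l2normSq f ≤ K ^ 2 * G.totalLength := by
  rw [totalLength, Finset.mul_sum]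
  refine Finset.sum_le_sum fun e _ => ?_
  have hL := (G.len_pos e).le
  simpa [intervalIntegral.integral_of_le hL, hL] using integral_sq_le_of_abs_le (hK e)

lemma sqrt_l2normSq_le_of_abs_le {f : GFun G} {K : ℝ} (hK0 : 0 ≤ K)
    (hK : ∀ e, ∀ x ∈ Icc 0 (G.len e), |f e x| ≤ K) :
    √(G.l2normSq f) ≤ K * √G.totalLength := by
  rw [← Real.sqrt_sq hK0, ← Real.sqrt_mul (sq_nonneg K)]
  exact Real.sqrt_le_sqrt (G.l2normSq_le_of_abs_le fun e =>
    ae_restrict_of_forall_mem measurableSet_Ioc fun x hx => hK e x (Ioc_subset_Icc_self hx))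

lemma abs_ip2_le {f g : GFun G} (hf : G.MemL2 f) (hg : G.MemL2 g) :
    |G.ip2 f g| ≤ √(G.l2normSq f) * √(G.l2normSq g) := by
  have hsq : ∀ (f : GFun G) e, 0 ≤ ∫ x in (0 : ℝ)..G.len e, f e x ^ 2 := fun f e =>
    intervalIntegral.integral_nonneg (G.len_pos e).le fun _ _ => sq_nonneg _
  have hedge : ∀ e, |∫ x in (0 : ℝ)..G.len e, f e x * g e x|
      ≤ √(∫ x in (0 : ℝ)..G.len e, f e x ^ 2) * √(∫ x in (0 : ℝ)..G.len e, g e x ^ 2) := by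
    intro e
    have hL := (G.len_pos e).le
    simp only [intervalIntegral.integral_of_le hL]
    exact abs_integral_mul_le_sqrt_mul_sqrt
      ((intervalIntegrable_iff_integrableOn_Ioc_of_le hL).1 (hf e))
      ((intervalIntegrable_iff_integrableOn_Ioc_of_le hL).1 (hg e))
  calc |G.ip2 f g| ≤ ∑ e, |∫ x in (0 : ℝ)..G.len e, f e x * g e x| :=
        Finset.abs_sum_le_sum_abs _ _
    _ ≤ _ := Finset.sum_le_sum fun e _ => hedge e
    _ ≤ _ := Real.sum_sqrt_mul_sqrt_le _ (hsq f) (hsq g)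

lemma sqrt_h1normSq_le_of_coercive {y p : GFun G} {α : ℝ} (hα : 0 < α) (hy : G.MemL2 y)
    (hp : G.MemL2 p) (hcoer : α * G.h1normSq p ≤ G.ip2 y p) :
    √(G.h1normSq p) ≤ √(G.l2normSq y) / α := by
  set s := √(G.h1normSq p)
  have hs : α * s ^ 2 ≤ √(G.l2normSq y) * s := by
    rw [Real.sq_sqrt (h1normSq_nonneg p)]
    calc α * G.h1normSq p ≤ |G.ip2 y p| := hcoer.trans (le_abs_self _)
      _ ≤ √(G.l2normSq y) * √(G.l2normSq p) := abs_ip2_le hy hp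
      _ ≤ √(G.l2normSq y) * s := mul_le_mul_of_nonneg_left
          (Real.sqrt_le_sqrt (G.l2normSq_le_h1normSq p)) (Real.sqrt_nonneg _)
  rw [le_div_iff₀ hα]
  rcases (show 0 ≤ s from Real.sqrt_nonneg _).eq_or_lt with h0 | h0
  · rw [← h0, zero_mul]
    exact Real.sqrt_nonneg _
  · nlinarith

lemma ip2_sub_left {f g h : GFun G} (hf : G.EdgeMemLp2 f) (hg : G.EdgeMemLp2 g)
    (hh : G.EdgeMemLp2 h) : G.ip2 (f - g) h = G.ip2 f h - G.ip2 g h := by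
  simp only [ip2, ← Finset.sum_sub_distrib, Pi.sub_apply, sub_mul]
  exact Finset.sum_congr rfl fun e _ => intervalIntegral.integral_sub
    (hf.intervalIntegrable_mul hh e) (hg.intervalIntegrable_mul hh e)

lemma ip2_congr_ae {f g h : GFun G}
    (hfg : ∀ e, f e =ᵐ[volume.restrict (Ioc 0 (G.len e))] g e) : G.ip2 f h = G.ip2 g h :=
  Finset.sum_congr rfl fun e _ => by
    simp only [intervalIntegral.integral_of_le (G.len_pos e).le]
    exact integral_congr_ae ((hfg e).mono fun x hx => congrArg (· * h e x) hx)

lemma bform_eq_ip2_add_ip2 {c0 u p : GFun G} (hu' : G.EdgeMemLp2 (G.edgeDeriv u))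
    (hu : G.EdgeMemLp2 (fun e x => c0 e x * u e x)) {pv : G.V → ℝ} (hp : G.MemH1 p pv) :
    G.bform c0 u p = G.ip2 (G.edgeDeriv u) (G.edgeDeriv p) + G.ip2 (fun e x => c0 e x * u e x) p := by
  simp only [bform, ip2, ← Finset.sum_add_distrib]
  exact Finset.sum_congr rfl fun e _ => intervalIntegral.integral_add
    (hu'.intervalIntegrable_mul hp.edgeMemLp2_edgeDeriv e) (hu.intervalIntegrable_mul hp.edgeMemLp2 e)

lemma edgeDeriv_sub_ae_eq {u t : GFun G} {e : G.E}
    (h : ∀ᵐ x ∂(volume.restrict (Ioc 0 (G.len e))),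
      DifferentiableAt ℝ (u e) x ∧ DifferentiableAt ℝ (t e) x) :
    G.edgeDeriv (u - t) e =ᵐ[volume.restrict (Ioc 0 (G.len e))]
      G.edgeDeriv u e - G.edgeDeriv t e := by
  filter_upwards [h, ae_restrict_Ioc_mem_Ioo_notMem (L := G.len e) countable_empty]
    with x ⟨hu, ht⟩ hx
  simp only [edgeDeriv, Pi.sub_apply, derivWithin_of_mem_nhds (Icc_mem_nhds hx.1.1 hx.1.2)]
  exact deriv_sub hu ht

lemma bform_sub_left {c0 u t p : GFun G} {C0 : ℝ} (hc0meas : ∀ e, Measurable (c0 e))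
    (hc0 : ∀ e, ∀ x ∈ Icc 0 (G.len e), |c0 e x| ≤ C0) (hu : G.EdgeMemLp2 u)
    (ht : G.EdgeMemLp2 t) (hu' : G.EdgeMemLp2 (G.edgeDeriv u))
    (ht' : G.EdgeMemLp2 (G.edgeDeriv t))
    (hd : ∀ e, G.edgeDeriv (u - t) e =ᵐ[volume.restrict (Ioc 0 (G.len e))]
      (G.edgeDeriv u - G.edgeDeriv t) e)
    {pv : G.V → ℝ} (hp : G.MemH1 p pv) :
    G.bform c0 (u - t) p = G.bform c0 u p - G.bform c0 t p := by
  have hcu := hu.mul_left hc0meas hc0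
  have hct := ht.mul_left hc0meas hc0
  have hc_sub : (fun e x => c0 e x * (u - t) e x)
      = (fun e x => c0 e x * u e x) - fun e x => c0 e x * t e x := by
    funext e x
    simp [mul_sub]
  rw [bform_eq_ip2_add_ip2 (fun e => ((hu'.sub ht') e).ae_eq (hd e).symm)
      (hc_sub ▸ hcu.sub hct) hp, bform_eq_ip2_add_ip2 hu' hcu hp, bform_eq_ip2_add_ip2 ht' hct hp,
    ip2_congr_ae hd, hc_sub, ip2_sub_left hu' ht' hp.edgeMemLp2_edgeDeriv,
    ip2_sub_left hcu hct hp.edgeMemLp2]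
  ring

lemma abs_bform_le {c0 u p : GFun G} (hu' : G.EdgeMemLp2 (G.edgeDeriv u))
    (hcu : G.EdgeMemLp2 (fun e x => c0 e x * u e x)) {pv : G.V → ℝ} (hp : G.MemH1 p pv) :
    |G.bform c0 u p| ≤ (√(G.l2normSq (G.edgeDeriv u))
      + √(G.l2normSq (fun e x => c0 e x * u e x))) * √(G.h1normSq p) := by
  rw [bform_eq_ip2_add_ip2 hu' hcu hp, add_mul]
  refine (abs_add_le _ _).trans (add_le_add ?_ ?_)
  · exact (abs_ip2_le hu'.memL2 hp.edgeMemLp2_edgeDeriv.memL2).trans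
      (mul_le_mul_of_nonneg_left (Real.sqrt_le_sqrt (G.l2normSq_edgeDeriv_le_h1normSq p))
        (Real.sqrt_nonneg _))
  · exact (abs_ip2_le hcu.memL2 hp.edgeMemLp2.memL2).trans
      (mul_le_mul_of_nonneg_left (Real.sqrt_le_sqrt (G.l2normSq_le_h1normSq p))
        (Real.sqrt_nonneg _))

section

variable {n : G.E → ℕ} {e : G.E}

lemma len_div_pos (hn : 0 < n e) : 0 < G.len e / n e :=
  div_pos (G.len_pos e) (by exact_mod_cast hn)

lemma max_zero_one_sub_len_div_eq_zero (hn : 0 < n e) :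
    max 0 (1 - G.len e / (G.len e / n e)) = 0 := by
  have hn' : (1 : ℝ) ≤ n e := by exact_mod_cast hn
  rw [div_div_cancel₀ (G.len_pos e).ne']
  exact max_eq_left (by linarith)

lemma hatFn_zero (v : G.V) (hn : 0 < n e) : G.hatFn n v e 0 = if G.src e = v then 1 else 0 := by
  simp [hatFn, max_zero_one_sub_len_div_eq_zero hn]

lemma hatFn_len (v : G.V) (hn : 0 < n e) :
    G.hatFn n v e (G.len e) = if G.dst e = v then 1 else 0 := by
  simp [hatFn, max_zero_one_sub_len_div_eq_zero hn]

lemma continuous_hatFn (n : G.E → ℕ) (v : G.V) (e : G.E) : Continuous (G.hatFn n v e) := by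
  unfold hatFn
  split_ifs <;> fun_prop

lemma abs_hatFn_le (v : G.V) (hn : 0 < n e) {x : ℝ} (hx : x ∈ Icc 0 (G.len e)) :
    |G.hatFn n v e x| ≤ 2 := by
  have hh := len_div_pos hn
  have h1 : max 0 (1 - x / (G.len e / n e)) ≤ 1 :=
    max_le zero_le_one (by linarith [div_nonneg hx.1 hh.le])
  have h2 : max 0 (1 - (G.len e - x) / (G.len e / n e)) ≤ 1 :=
    max_le zero_le_one (by linarith [div_nonneg (sub_nonneg.2 hx.2) hh.le])
  have h1' := le_max_left 0 (1 - x / (G.len e / n e))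
  have h2' := le_max_left 0 (1 - (G.len e - x) / (G.len e / n e))
  rw [abs_le]
  unfold hatFn
  constructor <;> split_ifs <;> linarith

lemma exists_hasDerivAt_hatFn (v : G.V) (hn : 0 < n e) {x : ℝ} (hx₁ : x ≠ G.len e / n e)
    (hx₂ : x ≠ G.len e - G.len e / n e) :
    ∃ d, |d| ≤ 2 / (G.len e / n e) ∧ HasDerivAt (G.hatFn n v e) d x := by
  set h := G.len e / n e
  have hh : 0 < h := len_div_pos hn
  have habs : |1 / h| = 1 / h := abs_of_pos (by positivity)
  obtain ⟨d₁, hd₁, hD₁⟩ := exists_hasDerivAt_ite_zero (G.src e = v) (by positivity) <|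
    exists_hasDerivAt_max_zero (((hasDerivAt_id' x).div_const h).const_sub 1)
      (by rwa [sub_ne_zero, ne_comm, ne_eq, div_eq_one_iff_eq hh.ne'])
  obtain ⟨d₂, hd₂, hD₂⟩ := exists_hasDerivAt_ite_zero (G.dst e = v) (by positivity) <|
    exists_hasDerivAt_max_zero ((((hasDerivAt_id' x).const_sub (G.len e)).div_const h).const_sub 1)
      (by rw [sub_ne_zero, ne_comm, ne_eq, div_eq_one_iff_eq hh.ne']; contrapose! hx₂; linarith)
  refine ⟨d₁ + d₂, ?_, hD₁.add hD₂⟩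
  rw [abs_neg, habs] at hd₁
  rw [abs_neg, neg_div, abs_neg, habs] at hd₂
  calc |d₁ + d₂| ≤ |d₁| + |d₂| := abs_add_le _ _
    _ ≤ 1 / h + 1 / h := add_le_add hd₁ hd₂
    _ = 2 / h := by ring

lemma isAffineOn_hatFn (v : G.V) {k : ℕ} (hk : k < n e) :
    IsAffineOn (G.hatFn n v e) (Icc (k * (G.len e / n e)) ((k + 1) * (G.len e / n e))) := by
  have hn : 0 < n e := by omega
  have hL : (n e : ℝ) * (G.len e / n e) = G.len e := mul_div_cancel₀ _ (by positivity)
  have hh := len_div_pos hn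
  exact ((isAffineOn_max_zero_one_sub_div hh k).ite_zero _).add
    ((isAffineOn_max_zero_one_sub_sub_div hh hk hL).ite_zero _)

variable (VD : Finset G.V)

lemma continuous_tildeExt (u : G.V → ℝ) (e : G.E) : Continuous (G.tildeExt VD u e) := by
  unfold tildeExt
  fun_prop

lemma hasDerivAt_tildeExt (u : G.V → ℝ) (e : G.E) (x : ℝ) :
    HasDerivAt (G.tildeExt VD u e) (((if G.dst e ∈ VD then u (G.dst e) else 0)
      - (if G.src e ∈ VD then u (G.src e) else 0)) / G.len e) x := by
  have h := (((hasDerivAt_id' x).const_mul ((if G.dst e ∈ VD then u (G.dst e) else 0)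
      - (if G.src e ∈ VD then u (G.src e) else 0))).div_const (G.len e)).const_add
    (if G.src e ∈ VD then u (G.src e) else 0)
  rwa [mul_one] at h

lemma isAffineOn_tildeExt (u : G.V → ℝ) (e : G.E) (s : Set ℝ) :
    IsAffineOn (G.tildeExt VD u e) s :=
  ⟨((if G.dst e ∈ VD then u (G.dst e) else 0) - (if G.src e ∈ VD then u (G.src e) else 0))
    / G.len e, if G.src e ∈ VD then u (G.src e) else 0, fun x _ => by unfold tildeExt; ring⟩

variable {VD} {v : G.V}

lemma ite_mem_pi_single (hv : v ∈ VD) (w : G.V) :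
    (if w ∈ VD then (Pi.single v 1 : G.V → ℝ) w else 0) = if w = v then 1 else 0 := by
  by_cases hw : w = v <;> simp [hw, hv]

lemma tildeExt_single (hv : v ∈ VD) (e : G.E) (x : ℝ) :
    G.tildeExt VD (Pi.single v 1) e x = (if G.src e = v then 1 else 0)
      + ((if G.dst e = v then 1 else 0) - (if G.src e = v then 1 else 0)) * x / G.len e := by
  simp only [tildeExt, ite_mem_pi_single hv]

lemma tildeExt_single_zero (hv : v ∈ VD) (e : G.E) :
    G.tildeExt VD (Pi.single v 1) e 0 = if G.src e = v then 1 else 0 := by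
  simp [tildeExt_single hv]

lemma tildeExt_single_len (hv : v ∈ VD) (e : G.E) :
    G.tildeExt VD (Pi.single v 1) e (G.len e) = if G.dst e = v then 1 else 0 := by
  rw [tildeExt_single hv, mul_div_cancel_right₀ _ (G.len_pos e).ne']
  ring

lemma abs_tildeExt_single_le (hv : v ∈ VD) {x : ℝ} (hx : x ∈ Icc 0 (G.len e)) :
    |G.tildeExt VD (Pi.single v 1) e x| ≤ 1 := by
  have hr₀ : 0 ≤ x / G.len e := div_nonneg hx.1 (G.len_pos e).le
  have hr₁ : x / G.len e ≤ 1 := (div_le_one (G.len_pos e)).2 hx.2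
  rw [tildeExt_single hv, mul_div_assoc, abs_le]
  constructor <;> split_ifs <;> linarith

lemma abs_edgeDeriv_tildeExt_single_le (hv : v ∈ VD) {x : ℝ} (hx : x ∈ Icc 0 (G.len e)) :
    |G.edgeDeriv (G.tildeExt VD (Pi.single v 1)) e x| ≤ 1 / G.len e := by
  rw [edgeDeriv, ((hasDerivAt_tildeExt VD _ e x).hasDerivWithinAt.derivWithin
    (uniqueDiffOn_Icc (G.len_pos e) x hx)), abs_div, abs_of_pos (G.len_pos e)]
  refine div_le_div_of_nonneg_right ?_ (G.len_pos e).le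
  simp only [ite_mem_pi_single hv, abs_le]
  constructor <;> split_ifs <;> norm_num

lemma ae_exists_hasDerivAt_hatFn (v : G.V) {e : G.E} (hn : 0 < n e) :
    ∀ᵐ x ∂(volume.restrict (Ioc 0 (G.len e))), x ∈ Ioo 0 (G.len e) ∧
      ∃ d, |d| ≤ 2 / (G.len e / n e) ∧ HasDerivAt (G.hatFn n v e) d x := by
  filter_upwards [ae_restrict_Ioc_mem_Ioo_notMem
    ((countable_singleton (G.len e - G.len e / n e)).insert (G.len e / n e))] with x ⟨hx, hxs⟩
  rw [mem_insert_iff, mem_singleton_iff, not_or] at hxs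
  exact ⟨hx, exists_hasDerivAt_hatFn v hn hxs.1 hxs.2⟩

lemma edgeMemLp2_hatFn (v : G.V) (hn : ∀ e, 0 < n e) : G.EdgeMemLp2 (G.hatFn n v) :=
  edgeMemLp2_of_abs_le (K := fun _ => 2) (fun e => (continuous_hatFn n v e).aestronglyMeasurable)
    fun e => ae_restrict_of_forall_mem measurableSet_Ioc fun _ hx =>
      abs_hatFn_le v (hn e) (Ioc_subset_Icc_self hx)

lemma edgeMemLp2_edgeDeriv_hatFn (v : G.V) (hn : ∀ e, 0 < n e) :
    G.EdgeMemLp2 (G.edgeDeriv (G.hatFn n v)) :=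
  edgeMemLp2_of_abs_le (aestronglyMeasurable_edgeDeriv _) fun e =>
    (ae_exists_hasDerivAt_hatFn v (hn e)).mono fun _ ⟨hx, _, hd, hD⟩ => by
      rwa [edgeDeriv_eq_of_hasDerivAt hx hD]

lemma edgeMemLp2_tildeExt_single (hv : v ∈ VD) : G.EdgeMemLp2 (G.tildeExt VD (Pi.single v 1)) :=
  edgeMemLp2_of_abs_le (K := fun _ => 1) (fun e => (continuous_tildeExt VD _ e).aestronglyMeasurable)
    fun _ => ae_restrict_of_forall_mem measurableSet_Ioc fun _ hx =>
      abs_tildeExt_single_le hv (Ioc_subset_Icc_self hx)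

lemma edgeMemLp2_edgeDeriv_tildeExt_single (hv : v ∈ VD) :
    G.EdgeMemLp2 (G.edgeDeriv (G.tildeExt VD (Pi.single v 1))) :=
  edgeMemLp2_of_abs_le (aestronglyMeasurable_edgeDeriv _) fun _ =>
    ae_restrict_of_forall_mem measurableSet_Ioc fun _ hx =>
      abs_edgeDeriv_tildeExt_single_le hv (Ioc_subset_Icc_self hx)

lemma edgeDeriv_hatFn_sub_tildeExt_ae_eq (v : G.V) {e : G.E} (hn : 0 < n e) :
    G.edgeDeriv (G.hatFn n v - G.tildeExt VD (Pi.single v 1)) e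
      =ᵐ[volume.restrict (Ioc 0 (G.len e))]
      G.edgeDeriv (G.hatFn n v) e - G.edgeDeriv (G.tildeExt VD (Pi.single v 1)) e :=
  edgeDeriv_sub_ae_eq <| (ae_exists_hasDerivAt_hatFn v hn).mono fun x ⟨_, _, _, hD⟩ =>
    ⟨hD.differentiableAt, (hasDerivAt_tildeExt VD _ e x).differentiableAt⟩

lemma memVhD_hatFn_sub_tildeExt (hv : v ∈ VD) (hn : ∀ e, 0 < n e) :
    G.MemVhD VD n (G.hatFn n v - G.tildeExt VD (Pi.single v 1)) fun _ => 0 := by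
  refine ⟨⟨⟨fun e => ?_, fun e => ?_, fun e => ?_, fun e => ?_, ?_, ?_⟩, fun e k hk => ?_⟩,
    fun _ _ => rfl⟩
  · exact ((continuous_hatFn n v e).sub (continuous_tildeExt VD _ e)).continuousOn
  · classical
    refine ⟨{G.len e / n e, G.len e - G.len e / n e}, fun x _ hx => ?_⟩
    simp only [Finset.mem_insert, Finset.mem_singleton, not_or] at hx
    obtain ⟨d, -, hD⟩ := exists_hasDerivAt_hatFn v (hn e) hx.1 hx.2
    exact (hD.sub (hasDerivAt_tildeExt VD _ e x)).differentiableAt.differentiableWithinAt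
  · simp [hatFn_zero v (hn e), tildeExt_single_zero hv]
  · simp [hatFn_len v (hn e), tildeExt_single_len hv]
  · exact ((edgeMemLp2_hatFn v hn).sub (edgeMemLp2_tildeExt_single hv)).memL2
  · exact EdgeMemLp2.memL2 fun e => (((edgeMemLp2_edgeDeriv_hatFn v hn).sub
      (edgeMemLp2_edgeDeriv_tildeExt_single hv)) e).ae_eq
      (edgeDeriv_hatFn_sub_tildeExt_ae_eq v (hn e)).symm
  · exact (isAffineOn_hatFn v hk).sub (isAffineOn_tildeExt VD _ e _)

lemma bform_hatFn_eq (hv : v ∈ VD) (hn : ∀ e, 0 < n e) {c0 : GFun G} {C0 : ℝ}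
    (hc0meas : ∀ e, Measurable (c0 e)) (hc0 : ∀ e, ∀ x ∈ Icc 0 (G.len e), |c0 e x| ≤ C0)
    {p : GFun G} {pv : G.V → ℝ} (hp : G.MemH1 p pv) :
    G.bform c0 (G.hatFn n v) p = G.bform c0 (G.hatFn n v - G.tildeExt VD (Pi.single v 1)) p
      + G.bform c0 (G.tildeExt VD (Pi.single v 1)) p := by
  rw [bform_sub_left hc0meas hc0 (edgeMemLp2_hatFn v hn) (edgeMemLp2_tildeExt_single hv)
    (edgeMemLp2_edgeDeriv_hatFn v hn) (edgeMemLp2_edgeDeriv_tildeExt_single hv)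
    (fun e => edgeDeriv_hatFn_sub_tildeExt_ae_eq v (hn e)) hp]
  ring

lemma abs_bform_tildeExt_single_le (hv : v ∈ VD) {c0 : GFun G} {C0 : ℝ}
    (hc0meas : ∀ e, Measurable (c0 e)) (hc0 : ∀ e, ∀ x ∈ Icc 0 (G.len e), |c0 e x| ≤ C0)
    (hC0 : 0 ≤ C0) {p : GFun G} {pv : G.V → ℝ} (hp : G.MemH1 p pv) :
    |G.bform c0 (G.tildeExt VD (Pi.single v 1)) p|
      ≤ (∑ e, 1 / G.len e + C0) * √G.totalLength * √(G.h1normSq p) := by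
  refine (abs_bform_le (edgeMemLp2_edgeDeriv_tildeExt_single hv)
    ((edgeMemLp2_tildeExt_single hv).mul_left hc0meas hc0) hp).trans
    (mul_le_mul_of_nonneg_right ?_ (Real.sqrt_nonneg _))
  rw [add_mul]
  refine add_le_add (sqrt_l2normSq_le_of_abs_le G.sum_one_div_len_nonneg fun e x hx =>
    (abs_edgeDeriv_tildeExt_single_le hv hx).trans (G.one_div_len_le_sum e)) ?_
  refine sqrt_l2normSq_le_of_abs_le hC0 fun e x hx => ?_
  rw [abs_mul]
  exact (mul_le_mul (hc0 e x hx) (abs_tildeExt_single_le hv hx) (abs_nonneg _) hC0).trans_eq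
    (mul_one C0)

lemma abs_Khop_le (hv : v ∈ VD) (hn : ∀ e, 0 < n e) {c0 : GFun G} {C0 : ℝ}
    (hc0meas : ∀ e, Measurable (c0 e)) (hc0 : ∀ e, ∀ x ∈ Icc 0 (G.len e), |c0 e x| ≤ C0)
    (hC0 : 0 ≤ C0) {α : ℝ} (hα : 0 < α) {y p : GFun G} {pv : G.V → ℝ} (hy : G.MemL2 y)
    (hp : G.MemH1 p pv) (hgal : ∀ w wv, G.MemVhD VD n w wv → G.bform c0 w p = G.ip2 y w)
    (hcoer : α * G.h1normSq p ≤ G.ip2 y p) :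
    |G.Khop c0 n y p v| ≤ (5 * √G.totalLength
      + (∑ e, 1 / G.len e + C0) * √G.totalLength / α) * √(G.l2normSq y) := by
  set φ := G.hatFn n v
  set t := G.tildeExt VD (Pi.single v 1)
  have hφ := edgeMemLp2_hatFn v hn
  have hw : |G.ip2 y (φ - t)| ≤ √(G.l2normSq y) * (3 * √G.totalLength) :=
    (abs_ip2_le hy (hφ.sub (edgeMemLp2_tildeExt_single hv)).memL2).trans <|
      mul_le_mul_of_nonneg_left (sqrt_l2normSq_le_of_abs_le (by norm_num) fun e x hx =>
        (abs_sub _ _).trans (by linarith [abs_hatFn_le v (hn e) hx, abs_tildeExt_single_le hv hx]))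
      (Real.sqrt_nonneg _)
  have hφb : |G.ip2 y φ| ≤ √(G.l2normSq y) * (2 * √G.totalLength) :=
    (abs_ip2_le hy hφ.memL2).trans <| mul_le_mul_of_nonneg_left
      (sqrt_l2normSq_le_of_abs_le (by norm_num) fun e x hx => abs_hatFn_le v (hn e) hx)
      (Real.sqrt_nonneg _)
  have htb : |G.bform c0 t p|
      ≤ (∑ e, 1 / G.len e + C0) * √G.totalLength * (√(G.l2normSq y) / α) :=
    (abs_bform_tildeExt_single_le hv hc0meas hc0 hC0 hp).trans <| mul_le_mul_of_nonneg_left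
      (sqrt_h1normSq_le_of_coercive hα hy hp.edgeMemLp2.memL2 hcoer) 
      (mul_nonneg (add_nonneg G.sum_one_div_len_nonneg hC0) (Real.sqrt_nonneg _))
  calc |G.Khop c0 n y p v| = |G.ip2 y (φ - t) + G.bform c0 t p - G.ip2 y φ| := by
        rw [Khop, bform_hatFn_eq hv hn hc0meas hc0 hp, hgal _ _ (memVhD_hatFn_sub_tildeExt hv hn)]
    _ ≤ |G.ip2 y (φ - t)| + |G.bform c0 t p| + |G.ip2 y φ| :=
        (abs_sub _ _).trans (add_le_add_left (abs_add_le _ _) _)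
    _ ≤ _ := add_le_add (add_le_add hw htb) hφb
    _ = _ := by ring

end

end MGraph

theorem discrete_kirchhoff_stability_general
    (G : MGraph) (VD : Finset G.V) (c0 : GFun G)
    (hc0meas : ∀ e, Measurable (c0 e))
    (hc0 : ∀ e, ∀ x ∈ Icc (0:ℝ) (G.len e), 0 ≤ c0 e x)
    (hc0b : ∃ C : ℝ, ∀ e, ∀ x ∈ Icc (0:ℝ) (G.len e), c0 e x ≤ C)
    (hcoer : ∃ α > 0, ∀ y yv, G.MemH1D VD y yv → α * G.h1normSq y ≤ G.bform c0 y y) :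
    ∃ c > 0, ∀ (n : G.E → ℕ), (∀ e, 0 < n e) →
      ∀ y : GFun G, G.MemL2 y →
      ∀ (ph : GFun G) (phv : G.V → ℝ), G.MemVhD VD n ph phv →
        (∀ w wv, G.MemVhD VD n w wv → G.bform c0 w ph = G.ip2 y w) →
        Real.sqrt (∑ v ∈ VD, (G.Khop c0 n y ph v)^2) ≤ c * Real.sqrt (G.l2normSq y) := by
  obtain ⟨C, hC⟩ := hc0b
  obtain ⟨α, hα, hcoer⟩ := hcoer
  have habs : ∀ e, ∀ x ∈ Icc 0 (G.len e), |c0 e x| ≤ max C 0 := fun e x hx =>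
    (abs_of_nonneg (hc0 e x hx)).trans_le ((hC e x hx).trans (le_max_left C 0))
  set B := 5 * √G.totalLength + (∑ e, 1 / G.len e + max C 0) * √G.totalLength / α
  refine ⟨max (√VD.card * B) 1, lt_max_of_lt_right one_pos, fun n hn y hy ph phv hph hgal => ?_⟩
  have hvertex : ∀ v ∈ VD, |G.Khop c0 n y ph v| ≤ B * √(G.l2normSq y) := fun v hv =>
    MGraph.abs_Khop_le hv hn hc0meas habs (le_max_right C 0) hα hy hph.1.1 hgal
      ((hcoer ph phv ⟨hph.1.1, hph.2⟩).trans_eq (hgal ph phv hph))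
  calc √(∑ v ∈ VD, G.Khop c0 n y ph v ^ 2) ≤ √VD.card * (B * √(G.l2normSq y)) :=
        sqrt_sum_sq_le_sqrt_card_mul VD hvertex
    _ ≤ max (√VD.card * B) 1 * √(G.l2normSq y) := by
        rw [← mul_assoc]
        exact mul_le_mul_of_nonneg_right (le_max_left _ _) (Real.sqrt_nonneg _)

/-- Lemma 3.3: stability of the discrete Kirchhoff operator,
`|S_h* y|₂ = |K_h(P_h y)|₂ ≤ c ‖y‖_{L²(Γ)}` with `c` independent of the mesh parameter. -/
theorem discrete_kirchhoff_stability
    (G : MGraph) (VD : Finset G.V) (c0 : GFun G)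
    (hc0meas : ∀ e, Measurable (c0 e))
    (hc0 : ∀ e, ∀ x ∈ Icc (0:ℝ) (G.len e), 0 ≤ c0 e x)
    (hc0b : ∃ C : ℝ, ∀ e, ∀ x ∈ Icc (0:ℝ) (G.len e), c0 e x ≤ C)
    (hbdd : ∃ C > 0, ∀ y yv w wv, G.MemH1D VD y yv → G.MemH1D VD w wv →
      |G.bform c0 y w| ≤ C * Real.sqrt (G.h1normSq y) * Real.sqrt (G.h1normSq w))
    (hcoer : ∃ α > 0, ∀ y yv, G.MemH1D VD y yv → α * G.h1normSq y ≤ G.bform c0 y y) :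
    ∃ c > 0, ∀ (n : G.E → ℕ), (∀ e, 0 < n e) →
      ∀ y : GFun G, G.MemL2 y →
      ∀ (ph : GFun G) (phv : G.V → ℝ), G.MemVhD VD n ph phv →
        (∀ w wv, G.MemVhD VD n w wv → G.bform c0 w ph = G.ip2 y w) →
        Real.sqrt (∑ v ∈ VD, (G.Khop c0 n y ph v)^2) ≤ c * Real.sqrt (G.l2normSq y) :=
  discrete_kirchhoff_stability_general G VD c0 hc0meas hc0 hc0b hcoer
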